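/- arXiv:2307.06568 — 6 statements merged into one kernel-verified Lean document; each statement's English description precedes it below -/
import Mathlib

section
/- Every finite group whose subgroup lattice is distributive is cyclic. -/
open Subgroup

section Aux

variable {G : Type*} [Group G]

lemma aux_eq_of_le_of_card_le [Finite G] {H K : Subgroup G} (h : H ≤ K)
    (hc : Nat.card K ≤ Nat.card H) : H = K := by
  apply SetLike.coe_injective
  apply Set.eq_of_subset_of_ncard_le h
  rwa [← Nat.card_coe_set_eq, ← Nat.card_coe_set_eq]

lemma aux_dd (hdistrib : ∀ A B C : Subgroup G, A ⊓ (B ⊔ C) = (A ⊓ B) ⊔ (A ⊓ C)) :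
    ∀ A B C : Subgroup G, (A ⊓ B) ⊔ C = (A ⊔ C) ⊓ (B ⊔ C) := by
  letI : DistribLattice (Subgroup G) :=
    DistribLattice.ofInfSupLe (fun A B C => (hdistrib A B C).le)
  exact fun A B C => sup_inf_right A B C

lemma aux_key (hdistrib : ∀ A B C : Subgroup G, A ⊓ (B ⊔ C) = (A ⊓ B) ⊔ (A ⊓ C))
    (a b : G) :
    zpowers a ⊔ zpowers b = (zpowers a ⊓ zpowers b) ⊔ zpowers (a * b) := by
  rw [aux_dd hdistrib]
  have hab : a * b ∈ zpowers a ⊔ zpowers b :=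
    mul_mem (mem_sup_left (mem_zpowers a)) (mem_sup_right (mem_zpowers b))
  have h1 : zpowers a ⊔ zpowers (a * b) = zpowers a ⊔ zpowers b := by
    apply le_antisymm
    · exact sup_le le_sup_left (zpowers_le.2 hab)
    · refine sup_le le_sup_left (zpowers_le.2 ?_)
      have : a⁻¹ * (a * b) ∈ zpowers a ⊔ zpowers (a * b) :=
        mul_mem (mem_sup_left (inv_mem (mem_zpowers a)))
          (mem_sup_right (mem_zpowers (a * b)))
      simpa using this
  have h2 : zpowers b ⊔ zpowers (a * b) = zpowers a ⊔ zpowers b := by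
    apply le_antisymm
    · exact sup_le le_sup_right (zpowers_le.2 hab)
    · refine sup_le ?_ le_sup_left
      refine zpowers_le.2 ?_
      have : (a * b) * b⁻¹ ∈ zpowers b ⊔ zpowers (a * b) :=
        mul_mem (mem_sup_right (mem_zpowers (a * b)))
          (mem_sup_left (inv_mem (mem_zpowers b)))
      simpa using this
  rw [h1, h2, inf_idem]

lemma aux_comm (hdistrib : ∀ A B C : Subgroup G, A ⊓ (B ⊔ C) = (A ⊓ B) ⊔ (A ⊓ C))
    (a b : G) : a * b = b * a := by
  set Z : Subgroup G := zpowers a ⊓ zpowers b with hZ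
  set T : Set G := {a * b} ∪ (Z : Set G) with hT
  -- every two elements of T commute
  have hTcomm : ∀ x ∈ T, ∀ y ∈ T, x * y = y * x := by
    have hZc : ∀ z ∈ Z, z * (a * b) = (a * b) * z := by
      intro z hz
      obtain ⟨i, hi⟩ := hz.1
      obtain ⟨j, hj⟩ := hz.2
      have cza : Commute z a := by rw [← hi]; exact (Commute.refl a).zpow_left i
      have czb : Commute z b := by rw [← hj]; exact (Commute.refl b).zpow_left j
      exact (cza.mul_right czb).eq
    intro x hx y hy
    rcases hx with hx | hx <;> rcases hy with hy | hy
    · rw [Set.mem_singleton_iff] at hx hy; rw [hx, hy]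
    · rw [Set.mem_singleton_iff] at hx; rw [hx]; exact (hZc y hy).symm
    · rw [Set.mem_singleton_iff] at hy; rw [hy]; exact hZc x hx
    · obtain ⟨i, hi⟩ := (hx : x ∈ Z).1
      obtain ⟨j, hj⟩ := (hy : y ∈ Z).1
      rw [← hi, ← hj]
      exact ((Commute.refl a).zpow_zpow i j).eq
  have hclT : closure T = zpowers a ⊔ zpowers b := by
    rw [hT, Subgroup.closure_union, Subgroup.closure_eq,
      ← Subgroup.zpowers_eq_closure, aux_key hdistrib a b, sup_comm]
  have haT : a ∈ closure T := by rw [hclT]; exact mem_sup_left (mem_zpowers a)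
  have hbT : b ∈ closure T := by rw [hclT]; exact mem_sup_right (mem_zpowers b)
  -- closure T is contained in the centralizer of T
  have h1 : closure T ≤ Subgroup.centralizer T := by
    rw [Subgroup.closure_le]
    intro x hx
    rw [SetLike.mem_coe, Subgroup.mem_centralizer_iff]
    exact fun y hy => hTcomm y hy x hx
  -- hence closure T is contained in the centralizer of a
  have h2 : closure T ≤ Subgroup.centralizer {a} := by
    rw [Subgroup.closure_le]
    intro x hx
    rw [SetLike.mem_coe, Subgroup.mem_centralizer_iff]
    intro g hg
    rw [Set.mem_singleton_iff] at hg
    subst hg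
    exact ((Subgroup.mem_centralizer_iff.1 (h1 haT)) x hx).symm
  exact Subgroup.mem_centralizer_iff.1 (h2 hbT) a rfl

end Aux

section Aux2

variable {G : Type*} [Group G] [Finite G]

lemma aux_prime (hdistrib : ∀ A B C : Subgroup G, A ⊓ (B ⊔ C) = (A ⊓ B) ⊔ (A ⊓ C))
    {p : ℕ} (hp : p.Prime) {x y : G} (hx : x ^ p = 1) (hy : y ^ p = 1)
    (hx1 : x ≠ 1) (hyx : y ∉ zpowers x) : False := by
  have hy1 : y ≠ 1 := fun h => hyx (h ▸ one_mem _)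
  have hox : orderOf x = p :=
    ((Nat.Prime.eq_one_or_self_of_dvd hp _ (orderOf_dvd_of_pow_eq_one hx)).resolve_left
      (by simpa [orderOf_eq_one_iff] using hx1))
  have hoy : orderOf y = p :=
    ((Nat.Prime.eq_one_or_self_of_dvd hp _ (orderOf_dvd_of_pow_eq_one hy)).resolve_left
      (by simpa [orderOf_eq_one_iff] using hy1))
  have hxy1 : x * y ≠ 1 := by
    intro h
    exact hyx ⟨-1, by show x ^ (-1 : ℤ) = y; rw [zpow_neg_one]; exact (inv_eq_of_mul_eq_one_left h).symm ▸ (inv_eq_iff_eq_inv.2 rfl) ⟩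
  have hxyp : (x * y) ^ p = 1 := by
    rw [(Commute.mul_pow (by exact aux_comm hdistrib x y) p), hx, hy, one_mul]
  have hoxy : orderOf (x * y) = p :=
    ((Nat.Prime.eq_one_or_self_of_dvd hp _ (orderOf_dvd_of_pow_eq_one hxyp)).resolve_left
      (by simpa [orderOf_eq_one_iff] using hxy1))
  set A := zpowers x with hA
  set B := zpowers y with hB
  set C := zpowers (x * y) with hC
  have cA : Nat.card A = p := by rw [hA, Nat.card_zpowers, hox]
  have cB : Nat.card B = p := by rw [hB, Nat.card_zpowers, hoy]
  have cC : Nat.card C = p := by rw [hC, Nat.card_zpowers, hoxy]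
  have hCle : C ≤ A ⊔ B :=
    zpowers_le.2 (mul_mem (mem_sup_left (mem_zpowers x)) (mem_sup_right (mem_zpowers y)))
  have hd := hdistrib C A B
  rw [inf_eq_left.2 hCle] at hd
  -- subgroups of a prime-order subgroup are ⊥ or the whole thing
  have key : ∀ D : Subgroup G, D ≤ A → Nat.card D = p → False → False := fun _ _ _ h => h
  have hCA : C ⊓ A = ⊥ := by
    rcases (Nat.Prime.eq_one_or_self_of_dvd hp _
      (Subgroup.card_dvd_of_le (inf_le_right : C ⊓ A ≤ A) |>.trans cA.dvd)) with h1 | h1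
    · exact Subgroup.card_eq_one.1 h1
    · exfalso
      have : C ⊓ A = A := aux_eq_of_le_of_card_le inf_le_right (by rw [h1, cA])
      have hAC : A ≤ C := this ▸ inf_le_left
      have hAeqC : A = C := aux_eq_of_le_of_card_le hAC (by rw [cA, cC])
      apply hyx
      have : y = x⁻¹ * (x * y) := by group
      rw [this]
      exact mul_mem (inv_mem (mem_zpowers x)) (hAeqC ▸ mem_zpowers (x * y) : x * y ∈ A)
  have hCB : C ⊓ B = ⊥ := by
    rcases (Nat.Prime.eq_one_or_self_of_dvd hp _
      (Subgroup.card_dvd_of_le (inf_le_right : C ⊓ B ≤ B) |>.trans cB.dvd)) with h1 | h1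
    · exact Subgroup.card_eq_one.1 h1
    · exfalso
      have : C ⊓ B = B := aux_eq_of_le_of_card_le inf_le_right (by rw [h1, cB])
      have hBC : B ≤ C := this ▸ inf_le_left
      have hBeqC : B = C := aux_eq_of_le_of_card_le hBC (by rw [cB, cC])
      -- then x ∈ B
      have hxB : x ∈ B := by
        have : x = (x * y) * y⁻¹ := by group
        rw [this]
        exact mul_mem (hBeqC ▸ mem_zpowers (x * y) : x * y ∈ B) (inv_mem (mem_zpowers y))
      -- so A ≤ B, hence A = B, hence y ∈ A, contradiction
      have hAB : A ≤ B := zpowers_le.2 hxB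
      have : A = B := aux_eq_of_le_of_card_le hAB (by rw [cA, cB])
      exact hyx (this ▸ mem_zpowers y)
  rw [hCA, hCB, sup_idem] at hd
  have : x * y ∈ C := mem_zpowers (x * y)
  rw [hd, Subgroup.mem_bot] at this
  exact hxy1 this

end Aux2

theorem stmt_0 (G : Type*) [Group G] [Finite G]
    (hdistrib : ∀ A B C : Subgroup G, A ⊓ (B ⊔ C) = (A ⊓ B) ⊔ (A ⊓ C)) :
    IsCyclic G := by
  have comm := aux_comm hdistrib
  letI : Fintype G := Fintype.ofFinite G
  classical
  -- the subgroup of n-th roots of unity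
  let S : ℕ → Subgroup G := fun n =>
    { carrier := {x : G | x ^ n = 1}
      one_mem' := one_pow n
      mul_mem' := fun {a b} ha hb => by
        show (a * b) ^ n = 1
        rw [Commute.mul_pow (comm a b) n, ha, hb, one_mul]
      inv_mem' := fun {a} ha => by
        show (a⁻¹) ^ n = 1
        rw [inv_pow, ha, inv_one] }
  have memS : ∀ {n : ℕ} {x : G}, x ∈ S n ↔ x ^ n = 1 := fun {n x} => Iff.rfl
  -- prime bound
  have hp_bound : ∀ q : ℕ, q.Prime → Nat.card (S q) ≤ q := by
    intro q hq
    by_contra hlt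
    push_neg at hlt
    have hne : S q ≠ ⊥ := by
      intro h
      rw [h, Subgroup.card_bot] at hlt
      exact Nat.lt_le_asymm hlt hq.pos
    obtain ⟨⟨x, hxS⟩, hx1⟩ := Subgroup.ne_bot_iff_exists_ne_one.1 hne
    have hx1' : x ≠ 1 := by simpa using hx1
    have hzle : zpowers x ≤ S q := zpowers_le.2 hxS
    have hcz : Nat.card (zpowers x) = q := by
      rw [Nat.card_zpowers]
      exact (Nat.Prime.eq_one_or_self_of_dvd hq _
        (orderOf_dvd_of_pow_eq_one hxS)).resolve_left
        (by simpa [orderOf_eq_one_iff] using hx1')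
    have : ¬ (S q ≤ zpowers x) := by
      intro h
      have := Nat.le_of_dvd Nat.card_pos (Subgroup.card_dvd_of_le h)
      rw [hcz] at this
      omega
    obtain ⟨y, hyS, hyx⟩ := SetLike.not_le_iff_exists.1 this
    exact aux_prime hdistrib hq hxS hyS hx1' hyx
  -- the general bound by strong induction
  have hbound : ∀ n : ℕ, 0 < n → Nat.card (S n) ≤ n := by
    intro n
    induction n using Nat.strong_induction_on with
    | _ n ih =>
      intro hn
      rcases eq_or_ne n 1 with rfl | hne
      · have : S 1 = ⊥ := by
          ext x
          simp [memS, Subgroup.mem_bot]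
        rw [this, Subgroup.card_bot]
      by_cases hnp : n.Prime
      · exact hp_bound n hnp
      obtain ⟨p, hp, hdvd⟩ := Nat.exists_prime_and_dvd hne
      set m := n / p with hm
      have hmp : m * p = n := Nat.div_mul_cancel hdvd
      have hm_pos : 0 < m := Nat.div_pos (Nat.le_of_dvd hn hdvd) hp.pos
      have hm_lt : m < n := Nat.div_lt_self hn hp.one_lt
      -- the homomorphism x ↦ x ^ m on S n
      let f : S n →* G :=
        { toFun := fun x => (x : G) ^ m
          map_one' := one_pow m
          map_mul' := fun x y => Commute.mul_pow (comm (x : G) (y : G)) m }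
      have hrange : f.range ≤ S p := by
        rintro g ⟨x, rfl⟩
        show ((x : G) ^ m) ^ p = 1
        rw [← pow_mul, hmp]
        exact x.2
      have hker : f.ker = (S m).subgroupOf (S n) := by
        ext x
        simp only [MonoidHom.mem_ker, Subgroup.mem_subgroupOf]
        rfl
      have hSm_le : S m ≤ S n := by
        intro x hx
        rw [memS] at hx ⊢
        rw [← hmp, pow_mul, hx, one_pow]
      have hker_card : Nat.card f.ker ≤ m := by
        rw [hker]
        rw [Nat.card_congr (Subgroup.subgroupOfEquivOfLe hSm_le).toEquiv]
        exact ih m hm_lt hm_pos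
      have hrange_card : Nat.card f.range ≤ p :=
        (Nat.le_of_dvd Nat.card_pos (Subgroup.card_dvd_of_le hrange)).trans (hp_bound p hp)
      calc Nat.card (S n)
          = Nat.card ((S n) ⧸ f.ker) * Nat.card f.ker :=
            Subgroup.card_eq_card_quotient_mul_card_subgroup f.ker
        _ = Nat.card f.range * Nat.card f.ker := by
            rw [Nat.card_congr (QuotientGroup.quotientKerEquivRange f).toEquiv]
        _ ≤ p * m := Nat.mul_le_mul hrange_card hker_card
        _ = n := by rw [mul_comm]; exact hmp
  -- conclude
  apply isCyclic_of_card_pow_eq_one_le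
  intro n hn
  have h1 : (Finset.filter (fun a : G => a ^ n = 1) Finset.univ).card
      = Fintype.card {x : G // x ^ n = 1} := (Fintype.card_subtype _).symm
  have h2 : Fintype.card {x : G // x ^ n = 1} = Nat.card (S n) := by
    rw [← Nat.card_eq_fintype_card]
    exact Nat.card_congr (Equiv.subtypeEquivRight (fun x => Iff.rfl))
  calc (Finset.filter (fun a : G => a ^ n = 1) Finset.univ).card
      = Nat.card (S n) := h1.trans h2
    _ ≤ n := hbound n hn
end

section
/- Let G be a non-abelian group generated by its prime order elements. Then the subgroup lattice of G contains a diamond sublattice of the form: top ⟨x,y⟩; middle ⟨x⟩, ⟨y⟩, ⟨xy⟩ (pairwise distinct); bottom the trivial subgroup; where any two of the middle subgroups join to ⟨x,y⟩ and any two intersect trivially. -/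
open Subgroup

/-- If `x` has prime order and `z` is a nontrivial element of `⟨x⟩`, then `x ∈ ⟨z⟩`. -/
lemma mem_zpowers_of_prime {G : Type*} [Group G] {x z : G} (hp : (orderOf x).Prime)
    (hz : z ∈ zpowers x) (hz1 : z ≠ 1) : x ∈ zpowers z := by
  have hdvd : orderOf z ∣ orderOf x := orderOf_dvd_of_mem_zpowers hz
  have hfin : Finite (zpowers x) := by
    refine Nat.finite_of_card_ne_zero ?_
    rw [Nat.card_zpowers]
    exact hp.ne_zero
  have hoz : orderOf z = orderOf x := by
    rcases (Nat.Prime.eq_one_or_self_of_dvd hp _ hdvd) with h | h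
    · exact absurd (orderOf_eq_one_iff.mp h) hz1
    · exact h
  have hle : zpowers z ≤ zpowers x := zpowers_le.2 hz
  have heq : zpowers z = zpowers x := by
    refine Subgroup.eq_of_le_of_card_ge hle ?_
    rw [Nat.card_zpowers, Nat.card_zpowers, hoz]
  rw [heq]
  exact mem_zpowers x

theorem stmt_5 (G : Type*) [Group G]
    (hgen : Subgroup.closure {g : G | (orderOf g).Prime} = ⊤)
    (hnonab : ∃ a b : G, a * b ≠ b * a) :
    ∃ x y : G,
      Subgroup.zpowers x ≠ Subgroup.zpowers y ∧
      Subgroup.zpowers x ≠ Subgroup.zpowers (x * y) ∧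
      Subgroup.zpowers y ≠ Subgroup.zpowers (x * y) ∧
      Subgroup.zpowers x ⊔ Subgroup.zpowers y = Subgroup.closure {x, y} ∧
      Subgroup.zpowers x ⊔ Subgroup.zpowers (x * y) = Subgroup.closure {x, y} ∧
      Subgroup.zpowers y ⊔ Subgroup.zpowers (x * y) = Subgroup.closure {x, y} ∧
      Subgroup.zpowers x ⊓ Subgroup.zpowers y = ⊥ ∧
      Subgroup.zpowers x ⊓ Subgroup.zpowers (x * y) = ⊥ ∧
      Subgroup.zpowers y ⊓ Subgroup.zpowers (x * y) = ⊥ := by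
  -- Step 1: find non-commuting prime-order elements
  have key : ∃ x y : G, (orderOf x).Prime ∧ (orderOf y).Prime ∧ x * y ≠ y * x := by
    by_contra h
    push_neg at h
    set S : Set G := {g : G | (orderOf g).Prime} with hS
    have hcent : Subgroup.closure S ≤ Subgroup.centralizer S := by
      rw [Subgroup.closure_le]
      intro s hs
      rw [SetLike.mem_coe, Subgroup.mem_centralizer_iff]
      intro g hg
      exact h g s hg hs
    rw [hgen] at hcent
    have hcenter : Subgroup.closure S ≤ Subgroup.center G := by
      rw [Subgroup.closure_le]
      intro s hs
      rw [SetLike.mem_coe, Subgroup.mem_center_iff]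
      intro g
      exact ((Subgroup.mem_centralizer_iff.mp (hcent (Subgroup.mem_top g))) s hs).symm
    rw [hgen] at hcenter
    obtain ⟨a, b, hab⟩ := hnonab
    exact hab ((Subgroup.mem_center_iff.mp (hcenter (Subgroup.mem_top b))) a)
  obtain ⟨x, y, hx, hy, hxy⟩ := key
  have hcomm : ∀ {a b : G}, b ∈ zpowers a → a * b = b * a := by
    rintro a b ⟨k, rfl⟩
    exact ((Commute.refl a).zpow_right k).eq
  have hyx : y ∉ zpowers x := fun h => hxy (hcomm h)
  have hxyp : x ∉ zpowers y := fun h => hxy (hcomm h).symm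
  -- if x ∈ ⟨x*y⟩ then x and y commute
  have hxm : x ∉ zpowers (x * y) := by
    intro h
    have hym : y ∈ zpowers (x * y) := by
      have := (zpowers (x * y)).mul_mem ((zpowers (x * y)).inv_mem h) (mem_zpowers (x * y))
      simpa using this
    obtain ⟨a, ha⟩ := h
    obtain ⟨b, hb⟩ := hym
    have hc : Commute ((x * y) ^ a) ((x * y) ^ b) := Commute.zpow_zpow_self _ a b
    simp only at ha hb
    rw [ha, hb] at hc
    exact hxy hc.eq
  have hym : y ∉ zpowers (x * y) := by
    intro h
    have hxm2 : x ∈ zpowers (x * y) := by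
      have := (zpowers (x * y)).mul_mem (mem_zpowers (x * y)) ((zpowers (x * y)).inv_mem h)
      simpa using this
    exact hxm hxm2
  -- elements x*y and y of the closure
  have hxc : x ∈ Subgroup.closure ({x, y} : Set G) :=
    Subgroup.subset_closure (by simp)
  have hyc : y ∈ Subgroup.closure ({x, y} : Set G) :=
    Subgroup.subset_closure (by simp)
  refine ⟨x, y, ?_, ?_, ?_, ?_, ?_, ?_, ?_, ?_, ?_⟩
  · intro h
    exact hyx (h ▸ mem_zpowers y)
  · intro h
    exact hxm (h ▸ mem_zpowers x)
  · intro h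
    exact hym (h ▸ mem_zpowers y)
  · rw [zpowers_eq_closure, zpowers_eq_closure, ← Subgroup.closure_union,
      Set.singleton_union]
  · apply le_antisymm
    · refine sup_le (zpowers_le.2 hxc) (zpowers_le.2 ?_)
      exact (Subgroup.closure _).mul_mem hxc hyc
    · rw [Subgroup.closure_le]
      intro g hg
      have hxmem : x ∈ zpowers x ⊔ zpowers (x * y) :=
        le_sup_left (α := Subgroup G) (mem_zpowers x)
      have hxymem : x * y ∈ zpowers x ⊔ zpowers (x * y) :=
        le_sup_right (α := Subgroup G) (mem_zpowers (x * y))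
      have hymem2 : y ∈ zpowers x ⊔ zpowers (x * y) := by
        have := (zpowers x ⊔ zpowers (x * y)).mul_mem
          ((zpowers x ⊔ zpowers (x * y)).inv_mem hxmem) hxymem
        simpa using this
      rcases hg with rfl | rfl
      · exact hxmem
      · exact hymem2
  · apply le_antisymm
    · refine sup_le (zpowers_le.2 hyc) (zpowers_le.2 ?_)
      exact (Subgroup.closure _).mul_mem hxc hyc
    · rw [Subgroup.closure_le]
      intro g hg
      have hymem : y ∈ zpowers y ⊔ zpowers (x * y) :=
        le_sup_left (α := Subgroup G) (mem_zpowers y)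
      have hxymem : x * y ∈ zpowers y ⊔ zpowers (x * y) :=
        le_sup_right (α := Subgroup G) (mem_zpowers (x * y))
      have hxmem2 : x ∈ zpowers y ⊔ zpowers (x * y) := by
        have := (zpowers y ⊔ zpowers (x * y)).mul_mem hxymem
          ((zpowers y ⊔ zpowers (x * y)).inv_mem hymem)
        simpa using this
      rcases hg with rfl | rfl
      · exact hxmem2
      · exact hymem
  · rw [Subgroup.eq_bot_iff_forall]
    rintro z ⟨hz1, hz2⟩
    by_contra hne
    exact hxyp ((zpowers_le.2 hz2) (mem_zpowers_of_prime hx hz1 hne))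
  · rw [Subgroup.eq_bot_iff_forall]
    rintro z ⟨hz1, hz2⟩
    by_contra hne
    exact hxm ((zpowers_le.2 hz2) (mem_zpowers_of_prime hx hz1 hne))
  · rw [Subgroup.eq_bot_iff_forall]
    rintro z ⟨hz1, hz2⟩
    by_contra hne
    exact hym ((zpowers_le.2 hz2) (mem_zpowers_of_prime hy hz1 hne))
end

section
/- A finite abelian group whose subgroup lattice contains no diamond of the form (top H, middle three distinct cyclic subgroups ⟨x⟩, ⟨y⟩, ⟨z⟩, bottom cyclic ⟨a⟩ with pairwise joins H and pairwise meets ⟨a⟩) is cyclic. -/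
open Subgroup

/-- Two distinct subgroups of the same prime order meet trivially. -/
lemma aux_prime_meet_bot {G : Type*} [Group G] [Finite G] {p : ℕ} (hp : p.Prime)
    {A B : Subgroup G} (hA : Nat.card A = p) (hB : Nat.card B = p) (hAB : A ≠ B) :
    A ⊓ B = ⊥ := by
  have h1 : Nat.card (A ⊓ B : Subgroup G) ∣ p := hA ▸ Subgroup.card_dvd_of_le inf_le_left
  rcases hp.eq_one_or_self_of_dvd _ h1 with h | h
  · exact Subgroup.card_eq_one.mp h
  · exfalso
    have hA' : A ⊓ B = A :=
      Subgroup.eq_of_le_of_card_ge inf_le_left (by rw [h, hA])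
    have hle : A ≤ B := by rw [← hA']; exact inf_le_right
    exact hAB (Subgroup.eq_of_le_of_card_ge hle (by rw [hA, hB]))

/-- If a finite commutative group is not cyclic, it has two distinct subgroups
generated by elements of the same prime order. -/
lemma aux_two_prime_order {G : Type*} [CommGroup G] [Finite G] (hnc : ¬ IsCyclic G) :
    ∃ (p : ℕ) (u t : G), p.Prime ∧ orderOf u = p ∧ orderOf t = p ∧
      Subgroup.zpowers u ≠ Subgroup.zpowers t := by
  obtain ⟨g, hg⟩ := Monoid.exists_orderOf_eq_exponent (Monoid.ExponentExists.of_finite (G := G))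
  set e := Monoid.exponent G with he
  have he0 : e ≠ 0 := Monoid.exponent_ne_zero_of_finite
  have hout : ∃ x : G, x ∉ Subgroup.zpowers g := by
    by_contra h; push_neg at h
    exact hnc ⟨⟨g, h⟩⟩
  -- pick an element of minimal order outside zpowers g
  set S : Set ℕ := {n | ∃ x : G, x ∉ Subgroup.zpowers g ∧ orderOf x = n} with hS
  have hSne : S.Nonempty := by
    obtain ⟨x, hx⟩ := hout
    exact ⟨orderOf x, x, hx, rfl⟩
  obtain ⟨h, hhg, hhm⟩ : sInf S ∈ S := Nat.sInf_mem hSne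
  set m := sInf S with hm
  have hmin : ∀ x : G, x ∉ Subgroup.zpowers g → m ≤ orderOf x := by
    intro x hx
    exact Nat.sInf_le ⟨x, hx, rfl⟩
  have hm0 : m ≠ 0 := by
    rw [← hhm]; exact (orderOf_pos h).ne'
  have hm1 : m ≠ 1 := by
    intro h1
    have : h = 1 := orderOf_eq_one_iff.mp (hhm.trans h1)
    exact hhg (this ▸ Subgroup.one_mem _)
  set p := m.minFac with hpdef
  have hp : p.Prime := Nat.minFac_prime hm1
  haveI : Fact p.Prime := ⟨hp⟩
  have hpm : p ∣ m := Nat.minFac_dvd m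
  have hme : m ∣ e := hhm ▸ Monoid.order_dvd_exponent h
  have hpe : p ∣ e := hpm.trans hme
  -- h^p is in zpowers g
  have hhp : h ^ p ∈ Subgroup.zpowers g := by
    by_contra hc
    have := hmin _ hc
    rw [orderOf_pow, hhm, Nat.gcd_eq_right hpm] at this
    have hlt : m / p < m := Nat.div_lt_self (Nat.pos_of_ne_zero hm0) hp.one_lt
    omega
  obtain ⟨k, hk⟩ := Subgroup.mem_zpowers_iff.mp hhp
  -- p divides k
  have hep : e = p * (e / p) := (Nat.mul_div_cancel' hpe).symm
  have hepne : ((e / p : ℕ) : ℤ) ≠ 0 := by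
    have : e / p ≠ 0 := by
      intro h0
      rw [h0, Nat.mul_zero] at hep
      exact he0 hep
    exact_mod_cast this
  have hcast : ((p : ℤ) * ((e / p : ℕ) : ℤ)) = (e : ℤ) := by exact_mod_cast hep.symm
  have hdvd : (e : ℤ) ∣ k * ((e / p : ℕ) : ℤ) := by
    have h1 : g ^ (k * ((e / p : ℕ) : ℤ)) = 1 := by
      rw [zpow_mul, hk, zpow_natCast, ← pow_mul, ← hep]
      apply orderOf_dvd_iff_pow_eq_one.mp
      rw [hhm]; exact hme
    have h2 := orderOf_dvd_iff_zpow_eq_one.mpr h1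
    rwa [hg] at h2
  have hpk : (p : ℤ) ∣ k := by
    rw [← hcast] at hdvd
    exact (mul_dvd_mul_iff_right hepne).mp hdvd
  obtain ⟨m', hm'⟩ := hpk
  -- t := h * (g ^ m')⁻¹ has order p and lies outside zpowers g
  set t := h * (g ^ m')⁻¹ with ht
  have htg : t ∉ Subgroup.zpowers g := by
    intro hc
    apply hhg
    have : h = t * g ^ m' := by rw [ht, inv_mul_cancel_right]
    rw [this]
    exact Subgroup.mul_mem _ hc (zpow_mem (Subgroup.mem_zpowers g) m')
  have htp : t ^ p = 1 := by
    have hstep : t ^ (p : ℤ) = h ^ (p : ℤ) * (g ^ (m' * (p : ℤ)))⁻¹ := by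
      rw [ht, mul_zpow, inv_zpow, ← zpow_mul]
    have h2 : (m' * (p : ℤ)) = k := by rw [hm']; ring
    rw [← zpow_natCast, hstep, h2, hk, zpow_natCast, mul_inv_cancel]
  have ht1 : t ≠ 1 := fun hc => htg (hc ▸ Subgroup.one_mem _)
  have htord : orderOf t = p := orderOf_eq_prime htp ht1
  -- u := g ^ (e / p) has order p
  set u := g ^ (e / p) with hu
  have huord : orderOf u = p := by
    rw [hu, orderOf_pow, hg, Nat.gcd_eq_right (Nat.div_dvd_of_dvd hpe),
      Nat.div_div_self hpe he0]
  have hune : Subgroup.zpowers u ≠ Subgroup.zpowers t := by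
    intro hc
    apply htg
    have h1 : t ∈ Subgroup.zpowers u := hc ▸ Subgroup.mem_zpowers t
    have h2 : Subgroup.zpowers u ≤ Subgroup.zpowers g :=
      Subgroup.zpowers_le.mpr (pow_mem (Subgroup.mem_zpowers g) _)
    exact h2 h1
  exact ⟨p, u, t, hp, huord, htord, hune⟩

theorem stmt_7 (G : Type*) [CommGroup G] [Finite G]
    (hfree : ¬ ∃ (H A B C D : Subgroup G),
      (∃ x : G, A = Subgroup.zpowers x) ∧ (∃ y : G, B = Subgroup.zpowers y) ∧
      (∃ z : G, C = Subgroup.zpowers z) ∧ (∃ a : G, D = Subgroup.zpowers a) ∧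
      A ≠ B ∧ A ≠ C ∧ B ≠ C ∧
      A ⊔ B = H ∧ A ⊔ C = H ∧ B ⊔ C = H ∧
      A ⊓ B = D ∧ A ⊓ C = D ∧ B ⊓ C = D) :
    IsCyclic G := by
  by_contra hnc
  obtain ⟨p, u, t, hp, huord, htord, hune⟩ := aux_two_prime_order hnc
  haveI : Fact p.Prime := ⟨hp⟩
  set A := Subgroup.zpowers u with hA
  set B := Subgroup.zpowers t with hB
  set C := Subgroup.zpowers (u * t) with hC
  have hcardA : Nat.card A = p := by rw [hA, Nat.card_zpowers, huord]
  have hcardB : Nat.card B = p := by rw [hB, Nat.card_zpowers, htord]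
  have hutg : u * t ≠ 1 := by
    intro hc
    apply hune
    have : t = u⁻¹ := by rw [eq_inv_iff_mul_eq_one, mul_comm]; exact hc
    rw [hA, hB, this, Subgroup.zpowers_inv]
  have hup : u ^ p = 1 := by rw [← huord]; exact pow_orderOf_eq_one u
  have htp2 : t ^ p = 1 := by rw [← htord]; exact pow_orderOf_eq_one t
  have hutp : (u * t) ^ p = 1 := by rw [mul_pow, hup, htp2, one_mul]
  have hutord : orderOf (u * t) = p := orderOf_eq_prime hutp hutg
  have hcardC : Nat.card C = p := by rw [hC, Nat.card_zpowers, hutord]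
  have hAC : A ≠ C := by
    intro hc
    apply hune
    have h1 : u * t ∈ A := hc ▸ Subgroup.mem_zpowers (u * t)
    have h2 : t ∈ A := by
      have : t = u⁻¹ * (u * t) := by group
      rw [this]; exact Subgroup.mul_mem _ (Subgroup.inv_mem _ (Subgroup.mem_zpowers u)) h1
    have hle : B ≤ A := Subgroup.zpowers_le.mpr h2
    exact (Subgroup.eq_of_le_of_card_ge hle (by rw [hcardA, hcardB])).symm
  have hBC : B ≠ C := by
    intro hc
    apply hune
    have h1 : u * t ∈ B := hc ▸ Subgroup.mem_zpowers (u * t)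
    have h2 : u ∈ B := by
      have : u = (u * t) * t⁻¹ := by group
      rw [this]; exact Subgroup.mul_mem _ h1 (Subgroup.inv_mem _ (Subgroup.mem_zpowers t))
    have hle : A ≤ B := Subgroup.zpowers_le.mpr h2
    exact Subgroup.eq_of_le_of_card_ge hle (by rw [hcardA, hcardB])
  apply hfree
  refine ⟨A ⊔ B, A, B, C, ⊥, ⟨u, rfl⟩, ⟨t, rfl⟩, ⟨u * t, rfl⟩,
    ⟨1, (Subgroup.zpowers_one_eq_bot).symm⟩, hune, hAC, hBC, rfl, ?_, ?_, ?_, ?_, ?_⟩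
  · -- A ⊔ C = A ⊔ B
    apply le_antisymm
    · apply sup_le le_sup_left
      apply Subgroup.zpowers_le.mpr
      exact Subgroup.mul_mem _ (Subgroup.mem_sup_left (Subgroup.mem_zpowers u))
        (Subgroup.mem_sup_right (Subgroup.mem_zpowers t))
    · apply sup_le le_sup_left
      apply Subgroup.zpowers_le.mpr
      have h1 : u⁻¹ * (u * t) ∈ A ⊔ C := Subgroup.mul_mem _
        (Subgroup.mem_sup_left (Subgroup.inv_mem _ (Subgroup.mem_zpowers u)))
        (Subgroup.mem_sup_right (Subgroup.mem_zpowers (u * t)))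
      rwa [inv_mul_cancel_left] at h1
  · -- B ⊔ C = A ⊔ B
    apply le_antisymm
    · apply sup_le le_sup_right
      apply Subgroup.zpowers_le.mpr
      exact Subgroup.mul_mem _ (Subgroup.mem_sup_left (Subgroup.mem_zpowers u))
        (Subgroup.mem_sup_right (Subgroup.mem_zpowers t))
    · refine sup_le ?_ le_sup_left
      apply Subgroup.zpowers_le.mpr
      have h1 : (u * t) * t⁻¹ ∈ B ⊔ C := Subgroup.mul_mem _
        (Subgroup.mem_sup_right (Subgroup.mem_zpowers (u * t)))
        (Subgroup.mem_sup_left (Subgroup.inv_mem _ (Subgroup.mem_zpowers t)))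
      rwa [mul_inv_cancel_right] at h1
  · exact aux_prime_meet_bot hp hcardA hcardB hune
  · exact aux_prime_meet_bot hp hcardA hcardC hAC
  · exact aux_prime_meet_bot hp hcardB hcardC hBC
end

section
/- Let G = ℤ × ℤ/n with p an odd prime dividing n. Then the subgroup lattice of G contains a generalized-cyclic-diamond: four distinct cyclic subgroups A, B, C, D with A, B, C pairwise joining to a common subgroup H and pairwise intersecting in D. -/
open AddSubgroup

theorem stmt_11 (n : ℕ) (hn : 0 < n) (p : ℕ) (hp : p.Prime) (hodd : 2 < p)
    (hdvd : p ∣ n) :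
    ∃ (H A B C D : AddSubgroup (ℤ × ZMod n)),
      (∃ x, A = AddSubgroup.zmultiples x) ∧ (∃ y, B = AddSubgroup.zmultiples y) ∧
      (∃ z, C = AddSubgroup.zmultiples z) ∧ (∃ w, D = AddSubgroup.zmultiples w) ∧
      A ≠ B ∧ A ≠ C ∧ B ≠ C ∧
      A ⊔ B = H ∧ A ⊔ C = H ∧ B ⊔ C = H ∧
      A ⊓ B = D ∧ A ⊓ C = D ∧ B ⊓ C = D := by
  haveI : NeZero n := ⟨hn.ne'⟩
  obtain ⟨m, hm⟩ := hdvd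
  have hm0 : 0 < m := Nat.pos_of_ne_zero (by rintro rfl; simp at hm; omega)
  set μ : ZMod n := (m : ZMod n) with hμdef
  set ν : ZMod n := ((2 * m : ℕ) : ZMod n) with hνdef
  have hν : ν = μ + μ := by
    rw [hνdef, hμdef]; push_cast; ring
  have hsmul : ∀ (k : ℤ), k • μ = (((k * m : ℤ) : ZMod n)) := by
    intro k
    rw [hμdef, zsmul_eq_mul]
    push_cast
    ring
  have hmZ : ((m : ℤ)) ≠ 0 := by exact_mod_cast hm0.ne'
  have hnZ : (n : ℤ) = (p : ℤ) * m := by exact_mod_cast hm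
  have hkey : ∀ k : ℤ, k • μ = 0 ↔ (p : ℤ) ∣ k := by
    intro k
    rw [hsmul, ZMod.intCast_zmod_eq_zero_iff_dvd, hnZ]
    constructor
    · intro h
      exact (mul_dvd_mul_iff_right hmZ).mp h
    · rintro ⟨t, rfl⟩
      exact ⟨t, by ring⟩
  have hp2 : ¬ ((p : ℤ) ∣ 2) := by
    intro h
    have := Int.le_of_dvd (by norm_num) h
    omega
  have hkey2 : ∀ k : ℤ, k • ν = 0 ↔ (p : ℤ) ∣ k := by
    intro k
    rw [hν]
    have : k • (μ + μ) = (2 * k) • μ := by rw [smul_add]; rw [two_mul, add_smul]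
    rw [this, hkey]
    constructor
    · intro h
      rcases (Int.Prime.dvd_mul' (by exact_mod_cast hp) h) with h | h
      · exact absurd h hp2
      · exact h
    · exact fun h => Dvd.dvd.mul_left h 2
  have hμ0 : μ ≠ 0 := by
    intro h
    have := (hkey 1).mp (by simpa using h)
    have := Int.le_of_dvd (by norm_num) this
    omega
  have hν0 : ν ≠ 0 := by
    intro h
    have := (hkey2 1).mp (by simpa using h)
    have := Int.le_of_dvd (by norm_num) this
    omega
  have hμν : μ ≠ ν := by
    intro h
    rw [hν] at h
    exact hμ0 (by linear_combination -h)
  -- the subgroups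
  set A : AddSubgroup (ℤ × ZMod n) := zmultiples ((1 : ℤ), (0 : ZMod n)) with hA
  set B : AddSubgroup (ℤ × ZMod n) := zmultiples ((1 : ℤ), μ) with hB
  set C : AddSubgroup (ℤ × ZMod n) := zmultiples ((1 : ℤ), ν) with hC
  set D : AddSubgroup (ℤ × ZMod n) := zmultiples ((p : ℤ), (0 : ZMod n)) with hD
  set H : AddSubgroup (ℤ × ZMod n) := A ⊔ zmultiples ((0 : ℤ), μ) with hH
  have smulA : ∀ k : ℤ, k • ((1 : ℤ), (0 : ZMod n)) = (k, (0 : ZMod n)) := by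
    intro k; simp [Prod.smul_mk]
  have smulB : ∀ k : ℤ, k • ((1 : ℤ), μ) = (k, k • μ) := by
    intro k; simp [Prod.smul_mk]
  have smulC : ∀ k : ℤ, k • ((1 : ℤ), ν) = (k, k • ν) := by
    intro k; simp [Prod.smul_mk]
  have smulD : ∀ k : ℤ, k • ((p : ℤ), (0 : ZMod n)) = (k * p, (0 : ZMod n)) := by
    intro k; simp [Prod.smul_mk, mul_comm]
  -- memberships in H
  have h10 : ((1 : ℤ), (0 : ZMod n)) ∈ H := mem_sup_left (mem_zmultiples _)
  have h0μ : ((0 : ℤ), μ) ∈ H := mem_sup_right (mem_zmultiples _)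
  have h1μ : ((1 : ℤ), μ) ∈ H := by
    have : ((1 : ℤ), μ) = ((1 : ℤ), (0 : ZMod n)) + ((0 : ℤ), μ) := by
      simp [Prod.ext_iff]
    rw [this]; exact add_mem h10 h0μ
  have h1ν : ((1 : ℤ), ν) ∈ H := by
    have : ((1 : ℤ), ν) = ((1 : ℤ), μ) + ((0 : ℤ), μ) := by
      simp [Prod.ext_iff, hν]
    rw [this]; exact add_mem h1μ h0μ
  -- distinctness
  have hAB : A ≠ B := by
    intro h
    have : ((1 : ℤ), μ) ∈ A := h ▸ mem_zmultiples _
    obtain ⟨k, hk⟩ := (mem_zmultiples_iff).mp this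
    rw [smulA] at hk
    simp only [Prod.mk.injEq] at hk
    exact hμ0 hk.2.symm
  have hAC : A ≠ C := by
    intro h
    have : ((1 : ℤ), ν) ∈ A := h ▸ mem_zmultiples _
    obtain ⟨k, hk⟩ := (mem_zmultiples_iff).mp this
    rw [smulA] at hk
    simp only [Prod.mk.injEq] at hk
    exact hν0 hk.2.symm
  have hBC : B ≠ C := by
    intro h
    have : ((1 : ℤ), ν) ∈ B := h ▸ mem_zmultiples _
    obtain ⟨k, hk⟩ := (mem_zmultiples_iff).mp this
    rw [smulB] at hk
    simp only [Prod.mk.injEq] at hk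
    obtain ⟨hk1, hk2⟩ := hk
    rw [hk1] at hk2
    simp at hk2
    exact hμν hk2
  -- joins
  have hABH : A ⊔ B = H := by
    apply le_antisymm
    · exact sup_le (le_sup_left) ((zmultiples_le).mpr h1μ)
    · apply sup_le le_sup_left
      rw [zmultiples_le]
      have : ((0 : ℤ), μ) = ((1 : ℤ), μ) - ((1 : ℤ), (0 : ZMod n)) := by
        simp [Prod.ext_iff]
      rw [this]
      exact sub_mem (mem_sup_right (mem_zmultiples _)) (mem_sup_left (mem_zmultiples _))
  have hACH : A ⊔ C = H := by
    apply le_antisymm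
    · exact sup_le (le_sup_left) ((zmultiples_le).mpr h1ν)
    · apply sup_le le_sup_left
      rw [zmultiples_le]
      have h0ν : ((0 : ℤ), ν) ∈ A ⊔ C := by
        have : ((0 : ℤ), ν) = ((1 : ℤ), ν) - ((1 : ℤ), (0 : ZMod n)) := by
          simp [Prod.ext_iff]
        rw [this]
        exact sub_mem (mem_sup_right (mem_zmultiples _)) (mem_sup_left (mem_zmultiples _))
      -- μ = q • ν with 2q = p+1
      obtain ⟨q, hq⟩ : ∃ q : ℤ, (p : ℤ) + 1 = 2 * q := by
        obtain ⟨r, hr⟩ := hp.odd_of_ne_two (by omega)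
        exact ⟨r + 1, by push_cast [hr]; ring⟩
      have hqν : q • ((0 : ℤ), ν) = ((0 : ℤ), μ) := by
        rw [show q • ((0 : ℤ), ν) = ((0 : ℤ), q • ν) by simp [Prod.smul_mk]]
        congr 1
        have : q • ν = (2 * q) • μ := by
          rw [hν, smul_add, two_mul, add_smul]
        rw [this, ← hq, add_smul, one_smul, (hkey p).mpr dvd_rfl, zero_add]
      rw [← hqν]
      exact zsmul_mem h0ν q
  have hBCH : B ⊔ C = H := by
    apply le_antisymm
    · exact sup_le ((zmultiples_le).mpr h1μ) ((zmultiples_le).mpr h1ν)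
    · apply sup_le
      · rw [zmultiples_le]
        have : ((1 : ℤ), (0 : ZMod n)) =
            ((1 : ℤ), μ) + ((1 : ℤ), μ) - ((1 : ℤ), ν) := by
          simp [Prod.ext_iff, hν]
        rw [this]
        exact sub_mem (add_mem (mem_sup_left (mem_zmultiples _)) (mem_sup_left (mem_zmultiples _)))
          (mem_sup_right (mem_zmultiples _))
      · rw [zmultiples_le]
        have : ((0 : ℤ), μ) = ((1 : ℤ), ν) - ((1 : ℤ), μ) := by
          simp [Prod.ext_iff, hν]
        rw [this]
        exact sub_mem (mem_sup_right (mem_zmultiples _)) (mem_sup_left (mem_zmultiples _))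
  -- intersections
  have hABD : A ⊓ B = D := by
    ext ⟨a, b⟩
    simp only [AddSubgroup.mem_inf, hA, hB, hD, mem_zmultiples_iff]
    constructor
    · rintro ⟨⟨k, hk⟩, ⟨j, hj⟩⟩
      rw [smulA] at hk
      rw [smulB] at hj
      simp only [Prod.mk.injEq] at hk hj
      obtain ⟨hk1, hk2⟩ := hk
      obtain ⟨hj1, hj2⟩ := hj
      have hjk : j = k := by omega
      subst hjk
      obtain ⟨t, ht⟩ := (hkey j).mp (by rw [hj2, ← hk2])
      refine ⟨t, ?_⟩
      rw [smulD, Prod.mk.injEq]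
      exact ⟨by rw [← hk1, ht, mul_comm], hk2⟩
    · rintro ⟨t, ht⟩
      rw [smulD] at ht
      constructor
      · exact ⟨t * p, by rw [smulA]; exact ht⟩
      · refine ⟨t * p, ?_⟩
        rw [smulB, (hkey (t * p)).mpr ⟨t, mul_comm t (p : ℤ)⟩]
        exact ht
  have hACD : A ⊓ C = D := by
    ext ⟨a, b⟩
    simp only [AddSubgroup.mem_inf, hA, hC, hD, mem_zmultiples_iff]
    constructor
    · rintro ⟨⟨k, hk⟩, ⟨j, hj⟩⟩
      rw [smulA] at hk
      rw [smulC] at hj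
      simp only [Prod.mk.injEq] at hk hj
      obtain ⟨hk1, hk2⟩ := hk
      obtain ⟨hj1, hj2⟩ := hj
      have hjk : j = k := by omega
      subst hjk
      obtain ⟨t, ht⟩ := (hkey2 j).mp (by rw [hj2, ← hk2])
      refine ⟨t, ?_⟩
      rw [smulD, Prod.mk.injEq]
      exact ⟨by rw [← hk1, ht, mul_comm], hk2⟩
    · rintro ⟨t, ht⟩
      rw [smulD] at ht
      constructor
      · exact ⟨t * p, by rw [smulA]; exact ht⟩
      · refine ⟨t * p, ?_⟩
        rw [smulC, (hkey2 (t * p)).mpr ⟨t, mul_comm t (p : ℤ)⟩]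
        exact ht
  have hBCD : B ⊓ C = D := by
    ext ⟨a, b⟩
    simp only [AddSubgroup.mem_inf, hB, hC, hD, mem_zmultiples_iff]
    constructor
    · rintro ⟨⟨k, hk⟩, ⟨j, hj⟩⟩
      rw [smulB] at hk
      rw [smulC] at hj
      simp only [Prod.mk.injEq] at hk hj
      obtain ⟨hk1, hk2⟩ := hk
      obtain ⟨hj1, hj2⟩ := hj
      have hjk : j = k := by omega
      subst hjk
      have hμ0' : j • μ = 0 := by
        have h2 : j • μ = j • ν := by rw [hk2, hj2]
        rw [hν, smul_add] at h2
        linear_combination -h2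
      obtain ⟨t, ht⟩ := (hkey j).mp hμ0'
      refine ⟨t, ?_⟩
      rw [smulD, Prod.mk.injEq]
      exact ⟨by rw [← hk1, ht, mul_comm], by rw [← hk2, hμ0']⟩
    · rintro ⟨t, ht⟩
      rw [smulD] at ht
      constructor
      · refine ⟨t * p, ?_⟩
        rw [smulB, (hkey (t * p)).mpr ⟨t, mul_comm t (p : ℤ)⟩]
        exact ht
      · refine ⟨t * p, ?_⟩
        rw [smulC, (hkey2 (t * p)).mpr ⟨t, mul_comm t (p : ℤ)⟩]
        exact ht
  exact ⟨H, A, B, C, D, ⟨_, rfl⟩, ⟨_, rfl⟩, ⟨_, rfl⟩, ⟨_, rfl⟩,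
    hAB, hAC, hBC, hABH, hACH, hBCH, hABD, hACD, hBCD⟩
end

section
/- Suppose in ℤ × ℤ/2^N three cyclic subgroups ⟨(x,a)⟩, ⟨(y,b)⟩, ⟨(z,c)⟩ pairwise join to the full group ℤ × ℤ/2^N. Then at least two of the residues a, b, c are odd. -/
/-!
Both generators have even second coordinate as soon as `a` and `b` are, so `⟨(x,a)⟩ ⊔ ⟨(y,b)⟩`
lies in `ℤ × 2(ℤ/2^N)`, a proper subgroup because `2` is not a unit modulo `2^N`. Hence no two
of `a, b, c` are even.
-/

theorem AddSubgroup.sup_zmultiples_ne_top_of_snd_mem {A M : Type*} [AddGroup A] [AddGroup M]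
    {K : AddSubgroup M} (hK : K ≠ ⊤) {g h : A × M} (hg : g.2 ∈ K) (hh : h.2 ∈ K) :
    zmultiples g ⊔ zmultiples h ≠ ⊤ := by
  intro htop
  have hle : zmultiples g ⊔ zmultiples h ≤ K.comap (AddMonoidHom.snd A M) :=
    sup_le (zmultiples_le_of_mem hg) (zmultiples_le_of_mem hh)
  refine hK (eq_top_iff.mpr fun m _ => ?_)
  simpa using hle (htop ▸ mem_top ((0, m) : A × M))

theorem AddMonoidHom.mulLeft_range_ne_top {R : Type*} [CommRing R] {r : R} (hr : ¬IsUnit r) :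
    (AddMonoidHom.mulLeft r).range ≠ ⊤ := by
  intro htop
  obtain ⟨t, ht⟩ := AddMonoidHom.mem_range.mp (htop ▸ AddSubgroup.mem_top (1 : R))
  exact hr (.of_mul_eq_one t ht)

theorem ZMod.not_isUnit_two_pow_two {N : ℕ} (hN : N ≠ 0) : ¬IsUnit (2 : ZMod (2 ^ N)) := by
  simpa using (ZMod.isUnit_prime_iff_not_dvd (n := 2 ^ N) Nat.prime_two).not.mpr
    (not_not.mpr (dvd_pow_self 2 hN))

theorem stmt_13 (N : ℕ) (hN : 1 ≤ N) (x y z : ℤ) (a b c : ZMod (2 ^ N))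
    (hab : AddSubgroup.zmultiples ((x, a) : ℤ × ZMod (2 ^ N)) ⊔
      AddSubgroup.zmultiples ((y, b) : ℤ × ZMod (2 ^ N)) = ⊤)
    (hac : AddSubgroup.zmultiples ((x, a) : ℤ × ZMod (2 ^ N)) ⊔
      AddSubgroup.zmultiples ((z, c) : ℤ × ZMod (2 ^ N)) = ⊤)
    (hbc : AddSubgroup.zmultiples ((y, b) : ℤ × ZMod (2 ^ N)) ⊔
      AddSubgroup.zmultiples ((z, c) : ℤ × ZMod (2 ^ N)) = ⊤) :
    ((¬ ∃ t : ZMod (2 ^ N), a = 2 * t) ∧ (¬ ∃ t : ZMod (2 ^ N), b = 2 * t)) ∨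
    ((¬ ∃ t : ZMod (2 ^ N), a = 2 * t) ∧ (¬ ∃ t : ZMod (2 ^ N), c = 2 * t)) ∨
    ((¬ ∃ t : ZMod (2 ^ N), b = 2 * t) ∧ (¬ ∃ t : ZMod (2 ^ N), c = 2 * t)) := by
  have not_both_even : ∀ {g h : ℤ × ZMod (2 ^ N)},
      AddSubgroup.zmultiples g ⊔ AddSubgroup.zmultiples h = ⊤ →
      (∃ s, g.2 = 2 * s) → ¬∃ t, h.2 = 2 * t := by
    rintro g h hgh ⟨s, hs⟩ ⟨t, ht⟩
    exact AddSubgroup.sup_zmultiples_ne_top_of_snd_mem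
      (AddMonoidHom.mulLeft_range_ne_top (ZMod.not_isUnit_two_pow_two (by omega)))
      ⟨s, hs.symm⟩ ⟨t, ht.symm⟩ hgh
  have := not_both_even hab
  have := not_both_even hac
  have := not_both_even hbc
  tauto
end

section
/- The subgroup lattice of ℤ × ℤ/2^N contains no generalized-cyclic-diamond: there do not exist a subgroup H and four cyclic subgroups A, B, C, D with A, B, C pairwise distinct, A ∨ B = A ∨ C = B ∨ C = H, and A ∧ B = A ∧ C = B ∧ C = D. -/
/-!
For a diamond of cyclic subgroups `⟨x⟩, ⟨y⟩, ⟨z⟩` of an abelian group, the order `n` of `x`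
modulo `⟨y⟩` equals the order of `y` modulo `⟨x⟩`: the meets give `ord_⟨y⟩ x = ord_⟨z⟩ x`, the joins
give `ord_⟨z⟩ x = ord_⟨z⟩ y`. Hence `D = ⟨n • x⟩ = ⟨n • y⟩`, and similarly for `z`.

In `ℤ × ℤ/2^N` this forces the three generators to be either all torsion or all of infinite order.
Torsion cyclic subgroups form a chain, while no two members of a diamond are comparable. In the
other case `⟨n • x⟩ = ⟨n • y⟩ = ⟨n • z⟩` lets us pick generators with a common first coordinate;
the torsion part of `H` is then generated by each of `x₂ - y₂`, `z₂ - y₂` and `x₂ - z₂`. But in a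
`2`-group the difference of two generators of a nontrivial cyclic group never generates it.
-/

open AddSubgroup

section Lattice

variable {α : Type*} [Lattice α]

structure IsDiamond (H D A B C : α) : Prop where
  sup_ab : A ⊔ B = H
  sup_ac : A ⊔ C = H
  sup_bc : B ⊔ C = H
  inf_ab : A ⊓ B = D
  inf_ac : A ⊓ C = D
  inf_bc : B ⊓ C = D

namespace IsDiamond

variable {H D A B C : α}

theorem swap (h : IsDiamond H D A B C) : IsDiamond H D B A C :=
  ⟨sup_comm B A ▸ h.sup_ab, h.sup_bc, h.sup_ac, inf_comm B A ▸ h.inf_ab, h.inf_bc, h.inf_ac⟩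

theorem rotate (h : IsDiamond H D A B C) : IsDiamond H D B C A :=
  ⟨h.sup_bc, sup_comm B A ▸ h.sup_ab, sup_comm C A ▸ h.sup_ac,
    h.inf_bc, inf_comm B A ▸ h.inf_ab, inf_comm C A ▸ h.inf_ac⟩

theorem eq_of_le (h : IsDiamond H D A B C) (hAB : A ≤ B) : A = C := by
  have hA : A = D := h.inf_ab ▸ (inf_eq_left.mpr hAB).symm
  have hB : B = H := h.sup_ab ▸ (sup_eq_right.mpr hAB).symm
  have hCB : C ≤ B := hB ▸ h.sup_bc ▸ le_sup_right
  exact hA.trans (h.inf_bc ▸ inf_eq_right.mpr hCB)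

end IsDiamond

end Lattice

section RelativeOrder

variable {G : Type*} [AddCommGroup G]

theorem nsmul_mem_iff_addOrderOf_mk_dvd (B : AddSubgroup G) (x : G) (n : ℕ) :
    n • x ∈ B ↔ addOrderOf (x : G ⧸ B) ∣ n := by
  rw [addOrderOf_dvd_iff_nsmul_eq_zero, ← QuotientAddGroup.mk_nsmul, QuotientAddGroup.eq_zero_iff]

theorem zsmul_mem_iff_addOrderOf_mk_dvd (B : AddSubgroup G) (x : G) (k : ℤ) :
    k • x ∈ B ↔ (addOrderOf (x : G ⧸ B) : ℤ) ∣ k := by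
  rw [addOrderOf_dvd_iff_zsmul_eq_zero, ← QuotientAddGroup.mk_zsmul, QuotientAddGroup.eq_zero_iff]

theorem zmultiples_inf_eq (x : G) (B : AddSubgroup G) :
    zmultiples x ⊓ B = zmultiples (addOrderOf (x : G ⧸ B) • x) := by
  ext g
  simp only [mem_inf, mem_zmultiples_iff]
  constructor
  · rintro ⟨⟨k, rfl⟩, hk⟩
    obtain ⟨j, rfl⟩ := (zsmul_mem_iff_addOrderOf_mk_dvd B x k).mp hk
    exact ⟨j, by rw [mul_comm, mul_zsmul, natCast_zsmul]⟩
  · rintro ⟨j, rfl⟩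
    refine ⟨⟨j * addOrderOf (x : G ⧸ B), by rw [mul_zsmul, natCast_zsmul]⟩, zsmul_mem ?_ j⟩
    exact (nsmul_mem_iff_addOrderOf_mk_dvd B x _).mpr dvd_rfl

theorem addOrderOf_mk_eq_of_inf_eq {A B C : AddSubgroup G} (h : A ⊓ B = A ⊓ C) {x : G}
    (hx : x ∈ A) : addOrderOf (x : G ⧸ B) = addOrderOf (x : G ⧸ C) := by
  have key (n : ℕ) : n • x ∈ B ↔ n • x ∈ C := by
    simpa [nsmul_mem hx n] using SetLike.ext_iff.mp h (n • x)
  apply Nat.dvd_antisymm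
  · rw [← nsmul_mem_iff_addOrderOf_mk_dvd, key, nsmul_mem_iff_addOrderOf_mk_dvd]
  · rw [← nsmul_mem_iff_addOrderOf_mk_dvd, ← key, nsmul_mem_iff_addOrderOf_mk_dvd]

theorem addOrderOf_mk_dvd_of_mem_sup {A : AddSubgroup G} {y z : G}
    (h : z ∈ A ⊔ zmultiples y) : addOrderOf (z : G ⧸ A) ∣ addOrderOf (y : G ⧸ A) := by
  obtain ⟨a, ha, _, ⟨k, rfl⟩, rfl⟩ := mem_sup.mp h
  apply addOrderOf_dvd_of_mem_zmultiples
  refine ⟨k, ?_⟩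
  simp [(QuotientAddGroup.eq_zero_iff a).mpr ha]

variable {H D : AddSubgroup G} {x y z : G}

theorem IsDiamond.addOrderOf_mk_eq
    (h : IsDiamond H D (zmultiples x) (zmultiples y) (zmultiples z)) :
    addOrderOf (x : G ⧸ zmultiples y) = addOrderOf (y : G ⧸ zmultiples x) := by
  have hx : x ∈ zmultiples z ⊔ zmultiples y := by
    rw [sup_comm, h.sup_bc, ← h.sup_ac]; exact mem_sup_left (mem_zmultiples x)
  have hy : y ∈ zmultiples z ⊔ zmultiples x := by
    rw [sup_comm, h.sup_ac, ← h.sup_bc]; exact mem_sup_left (mem_zmultiples y)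
  calc addOrderOf (x : G ⧸ zmultiples y)
      = addOrderOf (x : G ⧸ zmultiples z) :=
        addOrderOf_mk_eq_of_inf_eq (h.inf_ab.trans h.inf_ac.symm) (mem_zmultiples x)
    _ = addOrderOf (y : G ⧸ zmultiples z) :=
        Nat.dvd_antisymm (addOrderOf_mk_dvd_of_mem_sup hx) (addOrderOf_mk_dvd_of_mem_sup hy)
    _ = addOrderOf (y : G ⧸ zmultiples x) :=
        (addOrderOf_mk_eq_of_inf_eq (h.swap.inf_ab.trans h.swap.inf_ac.symm)
          (mem_zmultiples y)).symm

theorem IsDiamond.zmultiples_nsmul_eq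
    (h : IsDiamond H D (zmultiples x) (zmultiples y) (zmultiples z)) :
    zmultiples (addOrderOf (x : G ⧸ zmultiples y) • x) =
      zmultiples (addOrderOf (x : G ⧸ zmultiples y) • y) := by
  rw [← zmultiples_inf_eq, h.addOrderOf_mk_eq, ← zmultiples_inf_eq, inf_comm]

end RelativeOrder

section TwoGroup

variable {G : Type*} [AddCommGroup G] {N : ℕ}

theorem eq_zero_of_mem_zmultiples_two_nsmul {u : G} (hu : 2 ^ N • u = 0)
    (h : u ∈ zmultiples (2 • u)) : u = 0 := by
  obtain ⟨c, hc⟩ := h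
  have hodd : (addOrderOf u : ℤ) ∣ 2 * c - 1 := by
    rw [addOrderOf_dvd_iff_zsmul_eq_zero, ← sub_eq_zero.mpr hc]
    module
  obtain ⟨j, -, hj⟩ := (Nat.dvd_prime_pow Nat.prime_two).mp (addOrderOf_dvd_of_nsmul_eq_zero hu)
  rcases j with _ | j
  · exact AddMonoid.addOrderOf_eq_one_iff.mp hj
  · rw [hj, Nat.cast_pow, pow_succ] at hodd
    have : (2 : ℤ) ∣ 2 * c - 1 := (dvd_mul_left 2 _).trans hodd
    omega

theorem eq_zero_of_zmultiples_eq_zmultiples_sub {u v : G} (hu : 2 ^ N • u = 0)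
    (huv : zmultiples u = zmultiples v) (hsub : zmultiples u = zmultiples (u - v)) : u = 0 := by
  apply eq_zero_of_mem_zmultiples_two_nsmul hu
  obtain ⟨k, hk⟩ := mem_zmultiples_iff.mp (huv ▸ mem_zmultiples v)
  suffices zmultiples v ≤ zmultiples (2 • u) ∨ zmultiples (u - v) ≤ zmultiples (2 • u) by
    rcases this with h | h
    exacts [h (huv ▸ mem_zmultiples u), h (hsub ▸ mem_zmultiples u)]
  simp only [zmultiples_le, mem_zmultiples_iff, ← hk]
  obtain ⟨m, rfl | rfl⟩ := Int.even_or_odd' k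
  · exact Or.inl ⟨m, by module⟩
  · exact Or.inr ⟨-m, by module⟩

end TwoGroup

section ZModPrimePow

theorem ZMod.natCast_mem_zmultiples_natCast {n a b : ℕ} (h : a ∣ b) :
    (b : ZMod n) ∈ zmultiples (a : ZMod n) := by
  obtain ⟨c, rfl⟩ := h
  exact ⟨c, by simp [mul_comm]⟩

theorem ZMod.zmultiples_eq_zmultiples_gcd {n : ℕ} [NeZero n] (a : ZMod n) :
    zmultiples a = zmultiples ((a.val.gcd n : ℕ) : ZMod n) := by
  apply le_antisymm <;> rw [zmultiples_le]
  · simpa using natCast_mem_zmultiples_natCast (n := n) (Nat.gcd_dvd_left a.val n)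
  · rw [← ZMod.mul_inv_eq_gcd, mul_comm, ← ZMod.natCast_zmod_val a⁻¹, ← nsmul_eq_mul]
    exact nsmul_mem (mem_zmultiples a) _

theorem ZMod.zmultiples_le_total {p N : ℕ} (hp : p.Prime) (u v : ZMod (p ^ N)) :
    zmultiples u ≤ zmultiples v ∨ zmultiples v ≤ zmultiples u := by
  have : NeZero p := ⟨hp.ne_zero⟩
  obtain ⟨i, -, hi⟩ := (Nat.dvd_prime_pow hp).mp (Nat.gcd_dvd_right u.val (p ^ N))
  obtain ⟨j, -, hj⟩ := (Nat.dvd_prime_pow hp).mp (Nat.gcd_dvd_right v.val (p ^ N))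
  rw [zmultiples_eq_zmultiples_gcd u, zmultiples_eq_zmultiples_gcd v, hi, hj, zmultiples_le,
    zmultiples_le]
  exact (le_total j i).imp (fun h => natCast_mem_zmultiples_natCast (pow_dvd_pow p h))
    (fun h => natCast_mem_zmultiples_natCast (pow_dvd_pow p h))

end ZModPrimePow

section IntProd

variable {M : Type*} [AddCommGroup M] {x y : ℤ × M}

theorem zmultiples_eq_map_inr (hx : x.1 = 0) :
    zmultiples x = (zmultiples x.2).map (AddMonoidHom.inr ℤ M) := by
  rw [AddMonoidHom.map_zmultiples]
  congr
  ext <;> simp [hx]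

theorem zmultiples_le_total_of_fst_eq_zero {p N : ℕ} (hp : p.Prime) {x y : ℤ × ZMod (p ^ N)}
    (hx : x.1 = 0) (hy : y.1 = 0) :
    zmultiples x ≤ zmultiples y ∨ zmultiples y ≤ zmultiples x := by
  rw [zmultiples_eq_map_inr hx, zmultiples_eq_map_inr hy]
  exact (ZMod.zmultiples_le_total hp x.2 y.2).imp (map_mono ·) (map_mono ·)

theorem addOrderOf_mk_zmultiples_ne_zero [Finite M] (x : ℤ × M) (hy : y.1 ≠ 0) :
    addOrderOf (x : (ℤ × M) ⧸ zmultiples y) ≠ 0 := by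
  intro h0
  have hmem : ((Nat.card M * y.1 : ℤ)) • x ∈ zmultiples y :=
    ⟨Nat.card M * x.1, Prod.ext (by simp only [Prod.smul_fst, smul_eq_mul]; ring)
      (by simp [mul_comm, mul_zsmul])⟩
  rw [zsmul_mem_iff_addOrderOf_mk_dvd, h0, Nat.cast_zero, zero_dvd_iff] at hmem
  exact mul_ne_zero (by exact_mod_cast Nat.card_pos.ne') hy hmem

theorem addOrderOf_mk_zmultiples_eq_zero (hx : x.1 = 0) (hy : y.1 ≠ 0) :
    addOrderOf (y : (ℤ × M) ⧸ zmultiples x) = 0 := by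
  obtain ⟨k, hk⟩ := (nsmul_mem_iff_addOrderOf_mk_dvd (zmultiples x) y _).mpr dvd_rfl
  have := congrArg Prod.fst hk
  simp only [Prod.smul_fst, smul_eq_mul, nsmul_eq_mul, hx, mul_zero] at this
  exact_mod_cast (mul_eq_zero.mp this.symm).resolve_right hy

theorem fst_dvd_fst_of_nsmul_mem_zmultiples_nsmul {n : ℕ} (hn : n ≠ 0)
    (h : n • x ∈ zmultiples (n • y)) : y.1 ∣ x.1 := by
  obtain ⟨k, hk⟩ := h
  refine ⟨k, mul_left_cancel₀ (Int.natCast_ne_zero.mpr hn) ?_⟩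
  have := congrArg Prod.fst hk
  simp only [Prod.smul_fst, smul_eq_mul, nsmul_eq_mul] at this
  linear_combination -this

theorem natAbs_fst_eq_of_zmultiples_nsmul_eq {n : ℕ} (hn : n ≠ 0)
    (h : zmultiples (n • x) = zmultiples (n • y)) : x.1.natAbs = y.1.natAbs :=
  Int.natAbs_eq_of_dvd_dvd (fst_dvd_fst_of_nsmul_mem_zmultiples_nsmul hn (h ▸ mem_zmultiples _))
    (fst_dvd_fst_of_nsmul_mem_zmultiples_nsmul hn (h.symm ▸ mem_zmultiples _))

theorem exists_zmultiples_eq_and_fst_eq (h : x.1.natAbs = y.1.natAbs) :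
    ∃ y' : ℤ × M, zmultiples y' = zmultiples y ∧ y'.1 = x.1 := by
  rcases Int.natAbs_eq_natAbs_iff.mp h with h | h
  · exact ⟨y, rfl, h.symm⟩
  · exact ⟨-y, zmultiples_neg, by simp [h]⟩

theorem comap_inr_zmultiples_sup_zmultiples (hxy : y.1 = x.1) (hx : x.1 ≠ 0) :
    (zmultiples x ⊔ zmultiples y).comap (AddMonoidHom.inr ℤ M) = zmultiples (x.2 - y.2) := by
  ext t
  simp only [mem_comap, AddMonoidHom.inr_apply, mem_sup, mem_zmultiples_iff]
  constructor
  · rintro ⟨_, ⟨a, rfl⟩, _, ⟨b, rfl⟩, hab⟩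
    have hb : b = -a := by
      have := congrArg Prod.fst hab
      simp only [Prod.fst_add, Prod.smul_fst, smul_eq_mul, hxy] at this
      exact mul_left_cancel₀ hx (by linear_combination this)
    subst hb
    exact ⟨a, by simpa [sub_eq_add_neg] using congrArg Prod.snd hab⟩
  · rintro ⟨a, rfl⟩
    exact ⟨_, ⟨a, rfl⟩, _, ⟨-a, rfl⟩, Prod.ext (by simp [hxy])
      (by simp only [Prod.snd_add, Prod.smul_snd]; module)⟩

variable {H D : AddSubgroup (ℤ × M)} {z : ℤ × M}

theorem IsDiamond.fst_ne_zero [Finite M]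
    (h : IsDiamond H D (zmultiples x) (zmultiples y) (zmultiples z)) (hy : y.1 ≠ 0) :
    x.1 ≠ 0 := fun hx =>
  addOrderOf_mk_zmultiples_ne_zero x hy
    (h.addOrderOf_mk_eq.trans (addOrderOf_mk_zmultiples_eq_zero hx hy))

theorem IsDiamond.natAbs_fst_eq [Finite M]
    (h : IsDiamond H D (zmultiples x) (zmultiples y) (zmultiples z)) (hy : y.1 ≠ 0) :
    x.1.natAbs = y.1.natAbs :=
  natAbs_fst_eq_of_zmultiples_nsmul_eq (addOrderOf_mk_zmultiples_ne_zero x hy)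
    h.zmultiples_nsmul_eq

theorem IsDiamond.eq_of_fst_eq {N : ℕ} (hM : ∀ u : M, 2 ^ N • u = 0)
    (h : IsDiamond H D (zmultiples x) (zmultiples y) (zmultiples z))
    (hy : y.1 = x.1) (hz : z.1 = x.1) (hx : x.1 ≠ 0) : x = y := by
  have h₁ : zmultiples (x.2 - y.2) = zmultiples (z.2 - y.2) := by
    rw [← comap_inr_zmultiples_sup_zmultiples hy hx,
      ← comap_inr_zmultiples_sup_zmultiples (hy.trans hz.symm) (hz ▸ hx), h.sup_ab, ← h.sup_bc,
      sup_comm]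
  have h₂ : zmultiples (x.2 - y.2) = zmultiples (x.2 - z.2) := by
    rw [← comap_inr_zmultiples_sup_zmultiples hy hx, ← comap_inr_zmultiples_sup_zmultiples hz hx,
      h.sup_ab, h.sup_ac]
  have h₀ := eq_zero_of_zmultiples_eq_zmultiples_sub (hM _) h₁
    (by rwa [sub_sub_sub_cancel_right])
  exact Prod.ext hy.symm (sub_eq_zero.mp h₀)

end IntProd

theorem stmt_18 (N : ℕ) :
    ¬ ∃ (H A B C D : AddSubgroup (ℤ × ZMod (2 ^ N))),
      (∃ x, A = AddSubgroup.zmultiples x) ∧ (∃ y, B = AddSubgroup.zmultiples y) ∧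
      (∃ z, C = AddSubgroup.zmultiples z) ∧ (∃ w, D = AddSubgroup.zmultiples w) ∧
      A ≠ B ∧ A ≠ C ∧ B ≠ C ∧
      A ⊔ B = H ∧ A ⊔ C = H ∧ B ⊔ C = H ∧
      A ⊓ B = D ∧ A ⊓ C = D ∧ B ⊓ C = D := by
  rintro ⟨H, _, _, _, D, ⟨x, rfl⟩, ⟨y, rfl⟩, ⟨z, rfl⟩, -, hAB, hAC, hBC, hab, hac, hbc, hab', hac',
    hbc'⟩
  have h : IsDiamond H D (zmultiples x) (zmultiples y) (zmultiples z) :=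
    ⟨hab, hac, hbc, hab', hac', hbc'⟩
  by_cases hx : x.1 = 0
  · have hy : y.1 = 0 := not_not.mp fun hy => h.fst_ne_zero hy hx
    rcases zmultiples_le_total_of_fst_eq_zero Nat.prime_two hx hy with hle | hle
    · exact hAC (h.eq_of_le hle)
    · exact hBC (h.swap.eq_of_le hle)
  · obtain ⟨y', hy', hy'x⟩ :=
      exists_zmultiples_eq_and_fst_eq (h.natAbs_fst_eq (h.swap.fst_ne_zero hx))
    obtain ⟨z', hz', hz'x⟩ :=
      exists_zmultiples_eq_and_fst_eq (h.swap.rotate.natAbs_fst_eq (h.rotate.rotate.fst_ne_zero hx))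
    rw [← hy', ← hz'] at h
    have h2N (u : ZMod (2 ^ N)) : 2 ^ N • u = 0 := by simp
    exact hAB (by rw [← hy', h.eq_of_fst_eq h2N hy'x hz'x hx])
end
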